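/- Fix integers N ≥ 3 and k with 1 ≤ k ≤ N. Then for all complex numbers α and β: ‖Π̂(α(ψ₁ + ψ₂) + β Σ_{x=3}^{N} ψ_x)‖² ≤ (2(k−1)/(N−1)) · ‖α(ψ₁ + ψ₂) + β Σ_{x=3}^{N} ψ_x‖². -/

import Mathlib

/-!
The amplitude of `v = α (ψ₁ + ψ₂) + β ∑_{x ≥ 3} ψ_x` at `z` depends only on the number
`a ∈ {0, 1, 2}` of ones of `z` among the first two coordinates, and is affine in `a`: calling it
`u_a`, we have `u₂ = 2 u₁ - u₀`. Grouping the strings by `a`, with `n_a = C(2, a) C(N - 2, k - a)`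
of them in each class, `‖Π̂ v‖² = n₂ |u₂|²` and `‖v‖² = n₀ |u₀|² + n₁ |u₁|² + n₂ |u₂|²`.
The claim thus reads `(N - 2k + 1) n₂ |u₂|² ≤ 2 (k - 1) (n₀ |u₀|² + n₁ |u₁|²)`. It is trivial
when `2k > N`; otherwise bound `|2 u₁ - u₀|²` by Cauchy–Schwarz with weights `N - 2k + 1` and
`k - 1` and compare the binomial coefficients through their ratios.
-/

/-- The set `D` of strings `z ∈ {0,1}^N` of Hamming weight `k`. -/
abbrev DSet (N k : ℕ) : Type :=
  {z : Fin N → Bool // (Finset.univ.filter fun x => z x = true).card = k}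

/-- The unit vector `ψ_x ∈ ℂ^D` with `ψ_x(z) = C(N−1,k−1)^{−1/2}` if `z_x = 1` and `0` else. -/
noncomputable def psi (N k : ℕ) (x : Fin N) : EuclideanSpace ℂ (DSet N k) :=
  WithLp.toLp 2 (fun z : DSet N k => if z.val x = true then ((Real.sqrt ((N - 1).choose (k - 1)) : ℝ)⁻¹ : ℂ) else 0)

/-- The orthogonal projection `Π̂` of `ℂ^D` onto the span of the standard basis vectors `e_z`
with `z₁ = z₂ = 1`. -/
noncomputable def projHat (N k : ℕ) (hN : 2 ≤ N)
    (v : EuclideanSpace ℂ (DSet N k)) : EuclideanSpace ℂ (DSet N k) :=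
  WithLp.toLp 2 (fun z : DSet N k => if z.val ⟨0, by omega⟩ = true ∧ z.val ⟨1, by omega⟩ = true then v z else 0)

open Finset

section FiberCount

variable {α : Type*} [DecidableEq α] {T : Finset α}

lemma card_inter_eq_two_iff (hT : #T = 2) {S : Finset α} : #(S ∩ T) = 2 ↔ T ⊆ S := by
  rw [← hT, ← inter_eq_right]
  exact ⟨eq_of_subset_of_card_le inter_subset_right ∘ Eq.ge, congrArg card⟩

variable [Fintype α]

def fiberCard (T : Finset α) (k a : ℕ) : ℕ :=
  #{S ∈ powersetCard k univ | #(S ∩ T) = a}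

lemma sum_powersetCard_comp_card_inter {M : Type*} [AddCommMonoid M] (hT : #T = 2) (k : ℕ)
    (f : ℕ → M) :
    ∑ S ∈ powersetCard k univ, f #(S ∩ T) = ∑ a ∈ range 3, fiberCard T k a • f a := by
  rw [← sum_fiberwise_of_maps_to' (t := range 3) fun S _ ↦
    mem_range.2 (Nat.lt_succ_of_le (hT ▸ card_le_card inter_subset_right))]
  simp only [sum_const, fiberCard]

lemma sum_fiberCard (hT : #T = 2) (k : ℕ) :
    fiberCard T k 0 + fiberCard T k 1 + fiberCard T k 2 = (Fintype.card α).choose k := by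
  have h := sum_powersetCard_comp_card_inter hT k fun _ ↦ 1
  simp only [sum_const, card_powersetCard, card_univ, smul_eq_mul, mul_one,
    sum_range_succ, sum_range_zero, zero_add] at h
  exact h.symm

lemma fiberCard_zero (hT : #T = 2) (k : ℕ) :
    fiberCard T k 0 = (Fintype.card α - 2).choose k := by
  have : ({S ∈ powersetCard k univ | #(S ∩ T) = 0} : Finset (Finset α)) = powersetCard k Tᶜ := by
    ext S
    simp [subset_compl_iff_disjoint_right, disjoint_iff_inter_eq_empty, and_comm]
  rw [fiberCard, this, card_powersetCard, card_compl, hT]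

lemma fiberCard_two (hT : #T = 2) {k : ℕ} (hk : 2 ≤ k) :
    fiberCard T k 2 = (Fintype.card α - 2).choose (k - 2) := by
  have : fiberCard T k 2 = #{S ∈ powersetCard k univ | T ⊆ S} :=
    congrArg card (filter_congr fun S _ ↦ card_inter_eq_two_iff hT)
  rw [this, card_filter_powersetCard_subset _ _ _ (subset_univ T) (hT ▸ hk), card_univ, hT]

lemma fiberCard_two_of_lt (k : ℕ) (hk : k < 2) : fiberCard T k 2 = 0 := by
  refine card_eq_zero.2 (filter_eq_empty_iff.2 fun S hS h ↦ ?_)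
  have := (mem_powersetCard.1 hS).2 ▸ card_le_card (inter_subset_left (s₁ := S) (s₂ := T))
  omega

lemma fiberCard_one (hT : #T = 2) {k : ℕ} (hk : 2 ≤ k) :
    fiberCard T k 1 = 2 * (Fintype.card α - 2).choose (k - 1) := by
  obtain ⟨m, hm⟩ := Nat.exists_eq_add_of_le' (hT ▸ card_le_univ T)
  obtain ⟨j, rfl⟩ := Nat.exists_eq_add_of_le' hk
  have h := sum_fiberCard hT (j + 2)
  rw [fiberCard_zero hT, fiberCard_two hT hk, hm] at h
  rw [hm, show j + 2 - 1 = j + 1 by omega, Nat.add_sub_cancel]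
  simp only [Nat.add_sub_cancel, Nat.choose_succ_succ'] at h
  rw [show j + 1 + 1 = j + 2 from rfl] at h
  omega

end FiberCount

lemma mul_mul_add_sq_le {R : Type*} [CommRing R] [LinearOrder R] [IsStrictOrderedRing R]
    (a b p q : R) : a * b * (p + q) ^ 2 ≤ (a + b) * (b * p ^ 2 + a * q ^ 2) := by
  nlinarith [sq_nonneg (b * p - a * q)]

lemma choose_mul_norm_sq_le {m j : ℕ} (h : 2 * j + 2 ≤ m) (x y : ℂ) :
    ((m : ℝ) - 2 * j - 1) * m.choose j * ‖2 * x - y‖ ^ 2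
      ≤ 2 * (j + 1) * (m.choose (j + 2) * ‖y‖ ^ 2 + 2 * m.choose (j + 1) * ‖x‖ ^ 2) := by
  -- in terms of `N = m + 2` and `k = j + 2`, the Cauchy–Schwarz weights are
  -- `a = N - 2k + 1` and `b = k - 1`
  set a : ℝ := m - 2 * j - 1
  set b : ℝ := j + 1
  set p := 2 * ‖x‖
  set q := ‖y‖
  have hm : (2 * j + 2 : ℝ) ≤ m := by exact_mod_cast h
  have ha : 0 ≤ a := by linarith
  have hb : 0 < b := by positivity
  have r1 : b * m.choose (j + 1) = (a + b) * m.choose j := by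
    have := Nat.choose_succ_right_eq m j
    rw [← Nat.cast_inj (R := ℝ)] at this
    push_cast [Nat.cast_sub (by omega : j ≤ m)] at this
    linarith
  have r2 : ((j : ℝ) + 2) * m.choose (j + 2) = (a + b - 1) * m.choose (j + 1) := by
    have := Nat.choose_succ_right_eq m (j + 1)
    rw [← Nat.cast_inj (R := ℝ)] at this
    push_cast [Nat.cast_sub (by omega : j + 1 ≤ m)] at this
    linarith
  have htri : ‖2 * x - y‖ ≤ p + q := by
    refine (norm_sub_le _ _).trans ?_
    simp [p, q]
  have hX : ‖2 * x - y‖ ^ 2 ≤ (p + q) ^ 2 := pow_le_pow_left₀ (norm_nonneg _) htri 2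
  have hq : a * (a + b) * m.choose j ≤ 2 * b ^ 2 * m.choose (j + 2) := by
    have hab : ((j : ℝ) + 2) * a ≤ 2 * b * (a + b - 1) := by nlinarith
    have hc0' : ((j : ℝ) + 2) * (2 * b ^ 2 * m.choose (j + 2))
        = 2 * b * (a + b - 1) * ((a + b) * m.choose j) := by
      rw [← r1]; linear_combination (2 * b ^ 2) * r2
    refine le_of_mul_le_mul_left ?_ (by positivity : (0 : ℝ) < j + 2)
    rw [hc0', show ((j : ℝ) + 2) * (a * (a + b) * m.choose j)
      = (j + 2) * a * ((a + b) * m.choose j) by ring]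
    exact mul_le_mul_of_nonneg_right hab (by positivity)
  refine le_of_mul_le_mul_left ?_ hb
  calc b * (a * m.choose j * ‖2 * x - y‖ ^ 2)
      ≤ m.choose j * (a * b * (p + q) ^ 2) := by
        rw [show b * (a * m.choose j * ‖2 * x - y‖ ^ 2) = m.choose j * (a * b * ‖2 * x - y‖ ^ 2)
          by ring]
        gcongr
    _ ≤ m.choose j * ((a + b) * (b * p ^ 2 + a * q ^ 2)) :=
        mul_le_mul_of_nonneg_left (mul_mul_add_sq_le a b p q) (by positivity)
    _ = b * (b * m.choose (j + 1)) * p ^ 2 + a * (a + b) * m.choose j * q ^ 2 := by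
        rw [r1]; ring
    _ ≤ b * (b * m.choose (j + 1)) * p ^ 2 + 2 * b ^ 2 * m.choose (j + 2) * q ^ 2 := by
        gcongr
    _ = b * (2 * b * (m.choose (j + 2) * q ^ 2 + 2 * m.choose (j + 1) * ‖x‖ ^ 2)) := by
        ring

lemma fiberCard_two_mul_le {α : Type*} [Fintype α] [DecidableEq α] {T : Finset α} (hT : #T = 2)
    {k : ℕ} (hk : 1 ≤ k) (x y : ℂ) :
    fiberCard T k 2 * ‖2 * x - y‖ ^ 2
      ≤ 2 * ((k : ℝ) - 1) / ((Fintype.card α : ℝ) - 1) * (fiberCard T k 0 * ‖y‖ ^ 2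
          + fiberCard T k 1 * ‖x‖ ^ 2 + fiberCard T k 2 * ‖2 * x - y‖ ^ 2) := by
  obtain ⟨m, hm⟩ := Nat.exists_eq_add_of_le' (hT ▸ card_le_univ T)
  have hm' : (0 : ℝ) < (Fintype.card α : ℝ) - 1 := by
    rw [hm]; push_cast; linarith [m.cast_nonneg (α := ℝ)]
  rcases Nat.lt_or_ge k 2 with hk2 | hk2
  · obtain rfl : k = 1 := by omega
    simp [fiberCard_two_of_lt 1 one_lt_two]
  rcases Nat.lt_or_ge (Fintype.card α) (2 * k) with hkn | hkn
  · have hone : 1 ≤ 2 * ((k : ℝ) - 1) / ((Fintype.card α : ℝ) - 1) := by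
      rw [one_le_div hm']
      have : (Fintype.card α : ℝ) + 1 ≤ 2 * k := by exact_mod_cast hkn
      linarith
    refine le_trans ?_ (le_mul_of_one_le_left (by positivity) hone)
    have : 0 ≤ (fiberCard T k 0 : ℝ) * ‖y‖ ^ 2 + fiberCard T k 1 * ‖x‖ ^ 2 := by positivity
    linarith
  obtain ⟨j, rfl⟩ := Nat.exists_eq_add_of_le' hk2
  have key := choose_mul_norm_sq_le (show 2 * j + 2 ≤ m by omega) x y
  rw [fiberCard_zero hT, fiberCard_one hT hk2, fiberCard_two hT hk2, div_mul_eq_mul_div,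
    le_div_iff₀ hm']
  simp only [hm, Nat.add_sub_cancel, show j + 2 - 1 = j + 1 by omega]
  push_cast at key ⊢
  linarith

namespace DSet

variable {N k : ℕ}

def support (z : DSet N k) : Finset (Fin N) := {x | z.val x = true}

@[simp]
lemma mem_support {z : DSet N k} {x : Fin N} : x ∈ z.support ↔ z.val x = true := by
  simp [support]

lemma card_support (z : DSet N k) : #z.support = k := z.2

lemma support_injective : Function.Injective (support : DSet N k → Finset (Fin N)) := by
  intro z w h
  ext x
  simpa using congrArg (x ∈ ·) h

lemma image_support : univ.image (support : DSet N k → Finset (Fin N)) = powersetCard k univ := by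
  ext S
  simp only [mem_image, mem_univ, true_and, mem_powersetCard, subset_univ]
  refine ⟨fun ⟨z, hz⟩ ↦ hz ▸ z.2, fun hS ↦ ⟨⟨fun x ↦ decide (x ∈ S), by simpa using hS⟩, ?_⟩⟩
  ext x
  simp

lemma sum_comp_support {M : Type*} [AddCommMonoid M] (f : Finset (Fin N) → M) :
    ∑ z : DSet N k, f z.support = ∑ S ∈ powersetCard k univ, f S := by
  rw [← image_support, sum_image support_injective.injOn]

end DSet

lemma norm_sq_eq_sum_fiberCard {N k : ℕ} {T : Finset (Fin N)} (hT : #T = 2)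
    {v : EuclideanSpace ℂ (DSet N k)} (g : ℕ → ℂ) (hv : ∀ z, v z = g #(z.support ∩ T)) :
    ‖v‖ ^ 2 = ∑ a ∈ range 3, fiberCard T k a * ‖g a‖ ^ 2 := by
  simp_rw [EuclideanSpace.norm_sq_eq, hv]
  rw [DSet.sum_comp_support fun S ↦ ‖g #(S ∩ T)‖ ^ 2,
    sum_powersetCard_comp_card_inter hT k fun a ↦ ‖g a‖ ^ 2]
  simp only [nsmul_eq_mul]

lemma sum_psi_apply {N k : ℕ} (s : Finset (Fin N)) (z : DSet N k) :
    (∑ x ∈ s, psi N k x) z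
      = #(z.support ∩ s) * ((Real.sqrt ((N - 1).choose (k - 1)) : ℝ)⁻¹ : ℂ) := by
  simp only [psi, WithLp.ofLp_sum, Finset.sum_apply, ← DSet.mem_support]
  rw [sum_ite_mem, sum_const, nsmul_eq_mul, inter_comm]

def firstTwo {N : ℕ} (hN : 2 ≤ N) : Finset (Fin N) := {⟨0, by omega⟩, ⟨1, by omega⟩}

lemma card_firstTwo {N : ℕ} (hN : 2 ≤ N) : #(firstTwo hN) = 2 :=
  card_pair (by simp [Fin.ext_iff])

lemma compl_firstTwo {N : ℕ} (hN : 2 ≤ N) :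
    (firstTwo hN)ᶜ = univ.filter fun x : Fin N ↦ 2 ≤ (x : ℕ) := by
  ext x
  simp only [firstTwo, mem_compl, mem_insert, mem_singleton, mem_filter, mem_univ, true_and,
    Fin.ext_iff]
  omega

lemma projHat_apply {N k : ℕ} (hN : 2 ≤ N) (v : EuclideanSpace ℂ (DSet N k)) (z : DSet N k) :
    projHat N k hN v z = if firstTwo hN ⊆ z.support then v z else 0 := by
  simp [projHat, firstTwo, insert_subset_iff]

lemma smul_sum_psi_add_smul_sum_psi_compl_apply {N k : ℕ} (T : Finset (Fin N)) (α β : ℂ)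
    (z : DSet N k) :
    (α • ∑ x ∈ T, psi N k x + β • ∑ x ∈ Tᶜ, psi N k x) z
      = (α * #(z.support ∩ T) + β * (k - #(z.support ∩ T)))
          * ((Real.sqrt ((N - 1).choose (k - 1)) : ℝ)⁻¹ : ℂ) := by
  have hTc : (#(z.support ∩ Tᶜ) : ℂ) = k - #(z.support ∩ T) := by
    rw [← sdiff_eq_inter_compl]
    exact eq_sub_of_add_eq (by exact_mod_cast (card_sdiff_add_card_inter _ T).trans z.card_support)
  rw [PiLp.add_apply, PiLp.smul_apply, PiLp.smul_apply, sum_psi_apply, sum_psi_apply, hTc,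
    smul_eq_mul, smul_eq_mul]
  ring

theorem stmt12 (N k : ℕ) (hN : 3 ≤ N) (hk1 : 1 ≤ k) (α β : ℂ) :
    ‖projHat N k (by omega)
        (α • (psi N k ⟨0, by omega⟩ + psi N k ⟨1, by omega⟩) +
          β • ∑ x ∈ Finset.univ.filter (fun x : Fin N => 2 ≤ (x : ℕ)), psi N k x)‖ ^ 2
      ≤ 2 * ((k : ℝ) - 1) / ((N : ℝ) - 1) *
          ‖α • (psi N k ⟨0, by omega⟩ + psi N k ⟨1, by omega⟩) +
            β • ∑ x ∈ Finset.univ.filter (fun x : Fin N => 2 ≤ (x : ℕ)), psi N k x‖ ^ 2 := by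
  have hN2 : 2 ≤ N := by omega
  set T := firstTwo hN2 with hTdef
  have hT : #T = 2 := card_firstTwo hN2
  have hvT : α • (psi N k ⟨0, by omega⟩ + psi N k ⟨1, by omega⟩) +
      β • ∑ x ∈ Finset.univ.filter (fun x : Fin N => 2 ≤ (x : ℕ)), psi N k x
        = α • ∑ x ∈ T, psi N k x + β • ∑ x ∈ Tᶜ, psi N k x := by
    rw [hTdef, compl_firstTwo, firstTwo, sum_pair (by simp [Fin.ext_iff])]
  set g : ℕ → ℂ :=
    fun a ↦ (α * a + β * (k - a)) * ((Real.sqrt ((N - 1).choose (k - 1)) : ℝ)⁻¹ : ℂ)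
  have hv (z : DSet N k) :
      (α • ∑ x ∈ T, psi N k x + β • ∑ x ∈ Tᶜ, psi N k x) z = g #(z.support ∩ T) :=
    smul_sum_psi_add_smul_sum_psi_compl_apply T α β z
  have hPv (z : DSet N k) :
      projHat N k hN2 (α • ∑ x ∈ T, psi N k x + β • ∑ x ∈ Tᶜ, psi N k x) z
        = (fun a ↦ if a = 2 then g 2 else 0) #(z.support ∩ T) := by
    rw [projHat_apply, ← hTdef, hv]
    by_cases h : #(z.support ∩ T) = 2 <;> simp [h, ← card_inter_eq_two_iff hT]
  have hg : g 2 = 2 * g 1 - g 0 := by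
    simp only [g]; push_cast; ring
  rw [hvT, norm_sq_eq_sum_fiberCard hT (fun a ↦ if a = 2 then g 2 else 0) hPv,
    norm_sq_eq_sum_fiberCard hT g hv]
  simpa [sum_range_succ, hg] using fiberCard_two_mul_le hT hk1 (g 1) (g 0)
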